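/- Let P and L be Leibniz n-algebras with an action of P on L, and let p = k(n-1)+1. Then the p-linear maps defined on mixed tensor products by nesting the n-ary action brackets, [x_1,…,x_p] = [x_1,…,x_{n-1},[x_n,…,x_{2n-2},[…,[x_{p-n+1},…,x_p]…]]], define an action of the Leibniz p-algebra U_n^p(P) on the Leibniz p-algebra U_n^p(L). -/
import Mathlib


open Function TensorProduct

section Prelude

variable {L : Type*}

/-- The nested (iterated) bracket: `nestBr b k` is the `k*(n-1)+1`-ary operation
`ω_p(a_1,…,a_p) = b(a_1,…,a_{n-1}, nestBr b (k-1) (a_n,…,a_p))`. -/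
def nestBr {n : ℕ} (b : (Fin n → L) → L) : (k : ℕ) → (Fin (k * (n - 1) + 1) → L) → L
  | 0, a => a ⟨0, Nat.succ_pos _⟩
  | k + 1, a =>
    b fun j : Fin n =>
      if h : (j : ℕ) < n - 1 then
        a ⟨(j : ℕ),
          Nat.lt_succ_of_lt (lt_of_lt_of_le h (Nat.le_mul_of_pos_left _ (Nat.succ_pos k)))⟩
      else
        nestBr b k fun i =>
          a ⟨(n - 1) + (i : ℕ), by
            have h1 : (k + 1) * (n - 1) + 1 = (n - 1) + (k * (n - 1) + 1) := by ring
            rw [h1]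
            exact Nat.add_lt_add_left i.isLt _⟩

/-- `f` is a derivation with respect to the `n`-linear operation `b`. -/
def IsNDeriv {n : ℕ} [AddCommMonoid L] (b : (Fin n → L) → L) (f : L → L) : Prop :=
  ∀ a : Fin n → L, f (b a) = ∑ i, b (Function.update a i (f (a i)))

/-- The fundamental identity of Leibniz `n`-algebras:
`[[x_1,…,x_n],y_2,…,y_n] = Σ_i [x_1,…,[x_i,y_2,…,y_n],…,x_n]`
(the entries `y 1, …, y (n-1)` play the role of `y_2,…,y_n`). -/
def FundId {n : ℕ} [NeZero n] [AddCommMonoid L] (b : (Fin n → L) → L) : Prop :=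
  ∀ x y : Fin n → L,
    b (Function.update y 0 (b x)) =
      ∑ i, b (Function.update x i (b (Function.update y 0 (x i))))

/-- The right-nested bracket `[x_1,[x_2,…,[x_m,x_{m+1}]…]]` built from a binary bracket. -/
def nested2 (b : L → L → L) : (m : ℕ) → (Fin (m + 1) → L) → L
  | 0, a => a 0
  | m + 1, a => b (a 0) (nested2 b m fun i => a i.succ)

end Prelude
section Aux

variable {α : Type*} {n : ℕ}

theorem tail_lt {k : ℕ} (i : Fin (k * (n - 1) + 1)) :
    (n - 1) + (i : ℕ) < (k + 1) * (n - 1) + 1 := by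
  have h1 : (k + 1) * (n - 1) + 1 = (n - 1) + (k * (n - 1) + 1) := by ring
  have h2 := i.isLt
  omega

theorem head_lt {k j : ℕ} (hj : j < n - 1) : j < (k + 1) * (n - 1) + 1 := by
  have h1 : (k + 1) * (n - 1) + 1 = (n - 1) + (k * (n - 1) + 1) := by ring
  omega

/-- The tail of an argument vector for the nested bracket. -/
def tailArg (k : ℕ) (a : Fin ((k + 1) * (n - 1) + 1) → α) : Fin (k * (n - 1) + 1) → α :=
  fun i => a ⟨(n - 1) + (i : ℕ), tail_lt i⟩

/-- The inner `n`-ary argument vector for the nested bracket. -/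
def innerArg (b : (Fin n → α) → α) (k : ℕ) (a : Fin ((k + 1) * (n - 1) + 1) → α) :
    Fin n → α :=
  fun j => if h : (j : ℕ) < n - 1 then a ⟨(j : ℕ), head_lt h⟩ else nestBr b k (tailArg k a)

theorem nestBr_succ (b : (Fin n → α) → α) (k : ℕ) (a : Fin ((k + 1) * (n - 1) + 1) → α) :
    nestBr b (k + 1) a = b (innerArg b k a) := rfl

theorem nestBr_zero (b : (Fin n → α) → α) (a : Fin (0 * (n - 1) + 1) → α) :
    nestBr b 0 a = a ⟨0, Nat.succ_pos _⟩ := rfl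

theorem fin_zero_mul (i : Fin (0 * (n - 1) + 1)) : i = ⟨0, Nat.succ_pos _⟩ := by
  have h2 := i.isLt
  have h0 : 0 * (n - 1) = 0 := Nat.zero_mul _
  exact Fin.ext (by omega)

theorem tailArg_update (k : ℕ) (a : Fin ((k + 1) * (n - 1) + 1) → α)
    (i : Fin (k * (n - 1) + 1)) (x : α) :
    tailArg k (Function.update a ⟨(n - 1) + (i : ℕ), tail_lt i⟩ x)
      = Function.update (tailArg k a) i x := by
  funext j
  rcases eq_or_ne j i with rfl | h
  · simp [tailArg]
  · have h2 : (⟨(n - 1) + (j : ℕ), tail_lt j⟩ : Fin ((k + 1) * (n - 1) + 1))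
        ≠ ⟨(n - 1) + (i : ℕ), tail_lt i⟩ := by
      simp only [ne_eq, Fin.mk.injEq]
      intro hh
      exact h (Fin.ext (by omega))
    simp only [tailArg, Function.update_of_ne h2, Function.update_of_ne h]

theorem tailArg_update_lt (k : ℕ) (a : Fin ((k + 1) * (n - 1) + 1) → α) {j : ℕ}
    (hj : j < n - 1) (x : α) :
    tailArg k (Function.update a ⟨j, head_lt hj⟩ x) = tailArg k a := by
  funext i
  have h2 : (⟨(n - 1) + (i : ℕ), tail_lt i⟩ : Fin ((k + 1) * (n - 1) + 1)) ≠ ⟨j, head_lt hj⟩ := by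
    simp only [ne_eq, Fin.mk.injEq]; omega
  simp [tailArg, Function.update_of_ne h2]

theorem innerArg_apply_lt (b : (Fin n → α) → α) (k : ℕ) (a : Fin ((k + 1) * (n - 1) + 1) → α)
    {j : ℕ} (hj : j < n - 1) (hjn : j < n) :
    innerArg b k a ⟨j, hjn⟩ = a ⟨j, head_lt hj⟩ := by
  simp [innerArg, hj]

theorem innerArg_apply_last (b : (Fin n → α) → α) (k : ℕ)
    (a : Fin ((k + 1) * (n - 1) + 1) → α) (h : n - 1 < n) :
    innerArg b k a ⟨n - 1, h⟩ = nestBr b k (tailArg k a) := by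
  simp [innerArg]

theorem innerArg_update_lt (b : (Fin n → α) → α) (k : ℕ)
    (a : Fin ((k + 1) * (n - 1) + 1) → α) {j : ℕ} (hj : j < n - 1) (hjn : j < n) (x : α) :
    innerArg b k (Function.update a ⟨j, head_lt hj⟩ x)
      = Function.update (innerArg b k a) ⟨j, hjn⟩ x := by
  have ht := tailArg_update_lt (α := α) k a hj x
  funext j'
  rcases j' with ⟨j', hj'n⟩
  simp only [innerArg, ht, Function.update_apply, Fin.mk.injEq]
  by_cases h1 : j' < n - 1
  · by_cases h2 : j' = j
    · subst h2; simp [h1]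
    · simp [h1, h2]
  · have h2 : ¬ j' = j := by omega
    simp [h1, h2]

theorem innerArg_update_ge (b : (Fin n → α) → α) (k : ℕ) (hn1 : n - 1 < n)
    (a : Fin ((k + 1) * (n - 1) + 1) → α) (i : Fin (k * (n - 1) + 1)) (x : α) :
    innerArg b k (Function.update a ⟨(n - 1) + (i : ℕ), tail_lt i⟩ x)
      = Function.update (innerArg b k a) ⟨n - 1, hn1⟩
          (nestBr b k (Function.update (tailArg k a) i x)) := by
  have ht := tailArg_update k a i x
  funext j'
  rcases j' with ⟨j', hj'n⟩
  simp only [innerArg, ht, Function.update_apply, Fin.mk.injEq]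
  by_cases h1 : j' < n - 1
  · have h2 : ¬ j' = (n - 1) + (i : ℕ) := by omega
    have h3 : ¬ j' = n - 1 := by omega
    simp [h1, h2, h3]
  · have h3 : j' = n - 1 := by omega
    have h2 : ¬ j' = (n - 1) + (i : ℕ) ∨ (i : ℕ) = 0 := by omega
    simp [h1, h3]

theorem fin_split {k : ℕ} (i : Fin ((k + 1) * (n - 1) + 1)) :
    (∃ j : ℕ, ∃ hj : j < n - 1, i = ⟨j, head_lt hj⟩) ∨
      ∃ i' : Fin (k * (n - 1) + 1), i = ⟨(n - 1) + (i' : ℕ), tail_lt i'⟩ := by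
  by_cases h : (i : ℕ) < n - 1
  · exact Or.inl ⟨(i : ℕ), h, Fin.ext rfl⟩
  · have h1 : (k + 1) * (n - 1) + 1 = (n - 1) + (k * (n - 1) + 1) := by ring
    have h2 := i.isLt
    refine Or.inr ⟨⟨(i : ℕ) - (n - 1), by omega⟩, Fin.ext ?_⟩
    simp; omega

theorem sum_range_add' {M : Type*} [AddCommMonoid M] (f : ℕ → M) (a b : ℕ) :
    ∑ i ∈ Finset.range (a + b), f i
      = (∑ i ∈ Finset.range a, f i) + ∑ i ∈ Finset.range b, f (a + i) := by
  rw [Finset.range_eq_Ico, ← Finset.sum_Ico_consecutive f (Nat.zero_le a) (Nat.le_add_right a b),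
    ← Finset.range_eq_Ico, Finset.sum_Ico_eq_sum_range]
  simp

end Aux
section Alg

variable {K M : Type*} [Field K] [AddCommGroup M] [Module K M] {n : ℕ}
variable (B : MultilinearMap K (fun _ : Fin n => M) M)

theorem nestBr_update_add (hn : 2 ≤ n) :
    ∀ (k : ℕ) (a : Fin (k * (n - 1) + 1) → M) (i : Fin (k * (n - 1) + 1)) (x y : M),
      nestBr ⇑B k (Function.update a i (x + y))
        = nestBr ⇑B k (Function.update a i x) + nestBr ⇑B k (Function.update a i y)
  | 0, a, i, x, y => by
    rw [fin_zero_mul i]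
    rw [nestBr_zero, nestBr_zero, nestBr_zero, Function.update_self, Function.update_self,
      Function.update_self]
  | k + 1, a, i, x, y => by
    have hn1 : n - 1 < n := by omega
    rcases fin_split i with ⟨j, hj, rfl⟩ | ⟨i', rfl⟩
    · have hjn : j < n := by omega
      rw [nestBr_succ, nestBr_succ, nestBr_succ,
        innerArg_update_lt ⇑B k a hj hjn (x + y), innerArg_update_lt ⇑B k a hj hjn x,
        innerArg_update_lt ⇑B k a hj hjn y]
      exact B.map_update_add _ _ _ _
    · rw [nestBr_succ, nestBr_succ, nestBr_succ,
        innerArg_update_ge ⇑B k hn1 a i' (x + y), innerArg_update_ge ⇑B k hn1 a i' x,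
        innerArg_update_ge ⇑B k hn1 a i' y,
        nestBr_update_add hn k (tailArg k a) i' x y]
      exact B.map_update_add _ _ _ _

theorem nestBr_update_smul (hn : 2 ≤ n) :
    ∀ (k : ℕ) (a : Fin (k * (n - 1) + 1) → M) (i : Fin (k * (n - 1) + 1)) (c : K) (x : M),
      nestBr ⇑B k (Function.update a i (c • x))
        = c • nestBr ⇑B k (Function.update a i x)
  | 0, a, i, c, x => by
    rw [fin_zero_mul i]
    rw [nestBr_zero, nestBr_zero, Function.update_self, Function.update_self]
  | k + 1, a, i, c, x => by
    have hn1 : n - 1 < n := by omega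
    rcases fin_split i with ⟨j, hj, rfl⟩ | ⟨i', rfl⟩
    · have hjn : j < n := by omega
      rw [nestBr_succ, nestBr_succ, innerArg_update_lt ⇑B k a hj hjn (c • x),
        innerArg_update_lt ⇑B k a hj hjn x]
      exact B.map_update_smul _ _ _ _
    · rw [nestBr_succ, nestBr_succ, innerArg_update_ge ⇑B k hn1 a i' (c • x),
        innerArg_update_ge ⇑B k hn1 a i' x, nestBr_update_smul hn k (tailArg k a) i' c x]
      exact B.map_update_smul _ _ _ _

/-- The nested bracket as a multilinear map. -/
def nestMLM (hn : 2 ≤ n) (k : ℕ) : MultilinearMap K (fun _ : Fin (k * (n - 1) + 1) => M) M where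
  toFun := nestBr ⇑B k
  map_update_add' := by
    intro dec m i x y
    have hd : dec = instDecidableEqFin _ := Subsingleton.elim _ _
    subst hd
    exact nestBr_update_add B hn k m i x y
  map_update_smul' := by
    intro dec m i c x
    have hd : dec = instDecidableEqFin _ := Subsingleton.elim _ _
    subst hd
    exact nestBr_update_smul B hn k m i c x

end Alg
section Deriv

variable {K M : Type*} [Field K] [AddCommGroup M] [Module K M] {n : ℕ}
variable (B : MultilinearMap K (fun _ : Fin n => M) M)

theorem nestBr_deriv (hn : 2 ≤ n) {f : M → M} (hf : IsNDeriv ⇑B f) :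
    ∀ (k : ℕ) (a : Fin (k * (n - 1) + 1) → M),
      f (nestBr ⇑B k a) = ∑ i, nestBr ⇑B k (Function.update a i (f (a i)))
  | 0, a => by
    rw [Fintype.sum_eq_single (⟨0, Nat.succ_pos _⟩ : Fin (0 * (n - 1) + 1))
      (fun b hb => absurd (fin_zero_mul b) hb)]
    rw [nestBr_zero, nestBr_zero, Function.update_self]
  | k + 1, a => by
    have hn1 : n - 1 < n := by omega
    have hsplit : (k + 1) * (n - 1) + 1 = (n - 1) + (k * (n - 1) + 1) := by ring
    set v := innerArg ⇑B k a with hv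
    set G : ℕ → M := fun m =>
      if h : m < n then B (Function.update v ⟨m, h⟩ (f (v ⟨m, h⟩))) else 0 with hG
    set H : ℕ → M := fun m =>
      if h : m < (k + 1) * (n - 1) + 1 then
        nestBr ⇑B (k + 1) (Function.update a ⟨m, h⟩ (f (a ⟨m, h⟩))) else 0 with hH
    have key : ∀ t : Fin (k * (n - 1) + 1) → M,
        B (Function.update v ⟨n - 1, hn1⟩ (∑ i, t i))
          = ∑ i, B (Function.update v ⟨n - 1, hn1⟩ (t i)) := fun t => by
      have h2 := map_sum (B.toLinearMap v ⟨n - 1, hn1⟩) t Finset.univ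
      simp only [MultilinearMap.toLinearMap_apply] at h2
      exact h2
    have hGH : ∀ m, m < n - 1 → G m = H m := by
      intro m hm
      have hmn : m < n := by omega
      have hmp : m < (k + 1) * (n - 1) + 1 := head_lt hm
      simp only [hG, hH, dif_pos hmn, dif_pos hmp]
      have hva : v ⟨m, hmn⟩ = a ⟨m, hmp⟩ := innerArg_apply_lt ⇑B k a hm hmn
      rw [nestBr_succ, innerArg_update_lt ⇑B k a hm hmn (f (a ⟨m, hmp⟩)), ← hv, hva]
    have hGlast : G (n - 1) = ∑ m ∈ Finset.range (k * (n - 1) + 1), H ((n - 1) + m) := by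
      have hvl : v ⟨n - 1, hn1⟩ = nestBr ⇑B k (tailArg k a) := innerArg_apply_last ⇑B k a hn1
      have hHt : ∀ i : Fin (k * (n - 1) + 1),
          B (Function.update v ⟨n - 1, hn1⟩
            (nestBr ⇑B k (Function.update (tailArg k a) i (f (tailArg k a i)))))
            = H ((n - 1) + (i : ℕ)) := by
        intro i
        have hip : (n - 1) + (i : ℕ) < (k + 1) * (n - 1) + 1 := tail_lt i
        simp only [hH, dif_pos hip]
        rw [nestBr_succ, innerArg_update_ge ⇑B k hn1 a i
          (f (a ⟨(n - 1) + (i : ℕ), hip⟩)), ← hv]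
        rfl
      simp only [hG, dif_pos hn1]
      rw [hvl, nestBr_deriv hn hf k (tailArg k a), key]
      rw [← Fin.sum_univ_eq_sum_range (fun m => H ((n - 1) + m)) (k * (n - 1) + 1)]
      exact Finset.sum_congr rfl fun i _ => hHt i
    have hRHS : ∑ i, nestBr ⇑B (k + 1) (Function.update a i (f (a i)))
        = ∑ m ∈ Finset.range ((n - 1) + (k * (n - 1) + 1)), H m := by
      rw [← hsplit, ← Fin.sum_univ_eq_sum_range H ((k + 1) * (n - 1) + 1)]
      refine Finset.sum_congr rfl fun i _ => ?_
      simp only [hH, dif_pos i.isLt, Fin.eta]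
    have hLHS : f (nestBr ⇑B (k + 1) a) = ∑ m ∈ Finset.range n, G m := by
      rw [nestBr_succ, ← hv, hf v, ← Fin.sum_univ_eq_sum_range G n]
      refine Finset.sum_congr rfl fun j _ => ?_
      simp only [hG, dif_pos j.isLt, Fin.eta]
    rw [hLHS, hRHS, sum_range_add' H (n - 1) (k * (n - 1) + 1),
      show Finset.range n = Finset.range ((n - 1) + 1) from by congr 1; omega,
      Finset.sum_range_succ, hGlast]
    congr 1
    exact Finset.sum_congr rfl fun m hm => hGH m (Finset.mem_range.mp hm)

end Deriv
theorem nestBr_comm {M N : Type*} {n : ℕ} (b : (Fin n → M) → M) (c : (Fin n → N) → N)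
    (φ : M → N) (hφ : ∀ a : Fin n → M, φ (b a) = c fun i => φ (a i)) :
    ∀ (k : ℕ) (a : Fin (k * (n - 1) + 1) → M),
      φ (nestBr b k a) = nestBr c k fun i => φ (a i)
  | 0, a => rfl
  | k + 1, a => by
    rw [nestBr_succ, hφ, nestBr_succ]
    congr 1
    funext j
    simp only [innerArg]
    by_cases h : (j : ℕ) < n - 1
    · simp [h]
    · simp only [h, dite_false]
      rw [nestBr_comm b c φ hφ k (tailArg k a)]
      rfl

/-- an action of a Leibniz `n`-algebra `P` on `L` (encoded, equivalently,
by the bracket `B` of the semidirect product on `L × P`, whose second component is the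
bracket of `P` and whose restriction to `L` is the bracket of `L`) induces, via the nested
`p`-ary brackets (`p = k*(n-1)+1`), an action of `U_n^p(P)` on `U_n^p(L)`. -/
theorem nested_action {K L P : Type*} [Field K] [AddCommGroup L] [Module K L]
    [AddCommGroup P] [Module K P]
    (n k : ℕ) [NeZero n] (hn : 2 ≤ n) (hk : 1 ≤ k)
    (bL : MultilinearMap K (fun _ : Fin n => L) L) (hbL : FundId ⇑bL)
    (bP : MultilinearMap K (fun _ : Fin n => P) P) (hbP : FundId ⇑bP)
    (B : MultilinearMap K (fun _ : Fin n => L × P) (L × P)) (hB : FundId ⇑B)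
    (hBP : ∀ a : Fin n → L × P, (B a).2 = bP fun i => (a i).2)
    (hBL : ∀ l : Fin n → L, B (fun i => (l i, (0 : P))) = (bL l, 0)) :
    FundId (nestBr (⇑B) k) ∧
    (∃ Bp : MultilinearMap K (fun _ : Fin (k * (n - 1) + 1) => L × P) (L × P),
        ⇑Bp = nestBr (⇑B) k) ∧
    (∀ a : Fin (k * (n - 1) + 1) → L × P,
        (nestBr (⇑B) k a).2 = nestBr (⇑bP) k fun i => (a i).2) ∧
    (∀ l : Fin (k * (n - 1) + 1) → L,
        nestBr (⇑B) k (fun i => (l i, (0 : P))) = (nestBr (⇑bL) k l, 0)) := by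
  refine ⟨?_, ⟨nestMLM B hn k, rfl⟩,
    nestBr_comm ⇑B ⇑bP Prod.snd hBP k,
    fun l => (nestBr_comm ⇑bL ⇑B (fun x => (x, (0 : P))) (fun a => (hBL a).symm) k l).symm⟩
  obtain ⟨k', rfl⟩ : ∃ k', k = k' + 1 := ⟨k - 1, by omega⟩
  intro x y
  have h0 : (0 : ℕ) < n - 1 := by omega
  have h0n : (0 : ℕ) < n := by omega
  have e0p : (0 : Fin ((k' + 1) * (n - 1) + 1)) = ⟨0, head_lt h0⟩ := Fin.ext (by simp)
  have e0n : (0 : Fin n) = ⟨0, h0n⟩ := Fin.ext (by simp)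
  have hupd : ∀ z, nestBr ⇑B (k' + 1) (Function.update y 0 z)
      = B (Function.update (innerArg ⇑B k' y) 0 z) := by
    intro z
    rw [e0p, e0n, nestBr_succ, innerArg_update_lt ⇑B k' y h0 h0n z]
  have hD : IsNDeriv ⇑B (fun z => B (Function.update (innerArg ⇑B k' y) 0 z)) :=
    fun x' => hB x' (innerArg ⇑B k' y)
  rw [hupd (nestBr ⇑B (k' + 1) x)]
  rw [nestBr_deriv B hn hD (k' + 1) x]
  exact Finset.sum_congr rfl fun i _ => by rw [hupd (x i)]
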